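/- arXiv:math/0112284 — 2 statements merged into one kernel-verified Lean document; each statement's English description precedes it below -/
import Mathlib

section
/- (Corollary to Lemma 1) For all 1 ≤ k ≤ j < i ≤ d one has P_k a_i^{(j+1)} = a_i^{(j+1)}. -/
/-!
Every term of the series defining `aᵢ⁽ʲ⁾` (`j < i`) except the `n = 0` term `aᵢ⁽ʲ⁺¹⁾` starts on
the left with a positive power of `t_j`, and `t_m^* t_l = 0` for `m < l`. So downward induction
on `j` gives `t_m^* aᵢ⁽ʲ⁾ = 0` for all `m < j ≤ i`. At the start `aᵢ⁽ⁱ⁾ = Tᵢ tᵢ` the same argument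
only gives `t_m^* Tᵢ² = 0`, which the C*-identity upgrades to `t_m^* Tᵢ = 0`.
Hence every `t_m t_m^*` with `m ≤ k ≤ j` kills `aᵢ⁽ʲ⁺¹⁾`.
-/

theorem HasSum.mul_left_eq_zero {ι R : Type*} [Semiring R] [TopologicalSpace R]
    [IsTopologicalSemiring R] [T2Space R] {f : ι → R} {s : R} (hf : HasSum f s) (c : R)
    (hc : ∀ n, c * f n = 0) : c * s = 0 :=
  (hf.mul_left c).unique (by simpa only [hc] using hasSum_zero)

theorem CStarRing.mul_eq_zero_of_mul_mul_star_eq_zero {E : Type*} [NonUnitalNormedRing E]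
    [StarRing E] [CStarRing E] {x y : E} (h : x * y * star y = 0) : x * y = 0 := by
  rw [← CStarRing.mul_star_self_eq_zero_iff, star_mul, ← mul_assoc, h, zero_mul]

theorem mul_pow_succ_eq_zero {M : Type*} [MonoidWithZero M] {x t : M} (h : x * t = 0) (n : ℕ) :
    x * t ^ (n + 1) = 0 := by
  rw [pow_succ', ← mul_assoc, h, zero_mul]

section Orthogonality

variable {A : Type*} [CStarAlgebra A] {μ : ℝ}

theorem mul_eq_zero_of_hasSum_sq {x t T : A} (hxt : x * t = 0) (hT : IsSelfAdjoint T)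
    (hTsq : HasSum (fun n : ℕ => μ ^ (2 * n) • (t ^ (n + 1) * star (t ^ (n + 1)))) (T ^ 2)) :
    x * T = 0 := by
  have hxT2 : x * T ^ 2 = 0 := hTsq.mul_left_eq_zero x fun n => by
    rw [mul_smul_comm, ← mul_assoc, mul_pow_succ_eq_zero hxt, zero_mul, smul_zero]
  refine CStarRing.mul_eq_zero_of_mul_mul_star_eq_zero ?_
  rwa [hT.star_eq, mul_assoc, ← sq]

theorem mul_eq_zero_of_hasSum_conj {x t b c : A} (hxt : x * t = 0) (hxb : x * b = 0)
    (hc : HasSum (fun n : ℕ => μ ^ n • (t ^ n * b * star (t ^ n))) c) : x * c = 0 :=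
  hc.mul_left_eq_zero x fun n => by
    cases n with
    | zero => simp [hxb]
    | succ n => rw [mul_smul_comm, ← mul_assoc, ← mul_assoc, mul_pow_succ_eq_zero hxt,
        zero_mul, zero_mul, smul_zero]

theorem mul_eq_zero_of_orthogonal {t b : ℕ → A} {x T : A} {l i : ℕ}
    (horth : ∀ j, l ≤ j → j ≤ i → x * t j = 0) (hT : IsSelfAdjoint T)
    (hTsq : HasSum (fun n : ℕ => μ ^ (2 * n) • (t i ^ (n + 1) * star (t i ^ (n + 1)))) (T ^ 2))
    (hbi : b i = T * t i)
    (hb : ∀ j, l ≤ j → j < i →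
      HasSum (fun n : ℕ => μ ^ n • (t j ^ n * b (j + 1) * star (t j ^ n))) (b j)) :
    ∀ j, l ≤ j → j ≤ i → x * b j = 0 := by
  intro j hlj hji
  induction hji using Nat.decreasingInduction with
  | self =>
    rw [hbi, ← mul_assoc,
      mul_eq_zero_of_hasSum_sq (horth i hlj le_rfl) hT hTsq, zero_mul]
  | of_succ j hji ih =>
    exact mul_eq_zero_of_hasSum_conj (horth j hlj hji.le) (ih (by omega)) (hb j hlj hji)

end Orthogonality

theorem P_mul_a_corollary_general {A : Type*} [CStarAlgebra A] [PartialOrder A] [StarOrderedRing A]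
    {d : ℕ} {μ : ℝ}
    (t T P : ℕ → A) (a : ℕ → ℕ → A)
    (rel1 : ∀ i j, 1 ≤ i → i ≤ d → 1 ≤ j → j ≤ d → i ≠ j → star (t i) * t j = 0)
    (hP : ∀ j, P j = 1 - ∑ k ∈ Finset.Icc 1 j, t k * star (t k))
    (hTpos : ∀ i, 1 ≤ i → i ≤ d → 0 ≤ T i)
    (hTsq : ∀ i, 1 ≤ i → i ≤ d →
      HasSum (fun n : ℕ => μ ^ (2 * n) • ((t i) ^ (n + 1) * star ((t i) ^ (n + 1))))
        (T i ^ 2))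
    (haii : ∀ i, 1 ≤ i → i ≤ d → a i i = T i * t i)
    (haij : ∀ i j, 1 ≤ j → j < i → i ≤ d →
      HasSum (fun n : ℕ => μ ^ n • ((t j) ^ n * a i (j + 1) * star ((t j) ^ n)))
        (a i j)) :
    ∀ i j k, 1 ≤ k → k ≤ j → j < i → i ≤ d → P k * a i (j + 1) = a i (j + 1) := by
  intro i j k hk hkj hji hid
  have hkill : ∀ m ∈ Finset.Icc 1 k, t m * star (t m) * a i (j + 1) = 0 := by
    intro m hm
    obtain ⟨hm1, hmk⟩ := Finset.mem_Icc.mp hm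
    have horth : ∀ l, m + 1 ≤ l → l ≤ i → star (t m) * t l = 0 := fun l hml hli =>
      rel1 m l hm1 (by omega) (by omega) (by omega) (by omega)
    have hstar : star (t m) * a i (j + 1) = 0 :=
      mul_eq_zero_of_orthogonal horth (.of_nonneg (hTpos i (by omega) hid))
        (hTsq i (by omega) hid) (haii i (by omega) hid)
        (fun l hml hli => haij i l (by omega) hli hid) (j + 1) (by omega) hji
    rw [mul_assoc, hstar, mul_zero]
  rw [hP k, sub_mul, one_mul, Finset.sum_mul, Finset.sum_eq_zero hkill, sub_zero]

/-- **Corollary to Lemma 1.** For `1 ≤ k ≤ j < i ≤ d`,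
`P k * aᵢ⁽ʲ⁺¹⁾ = aᵢ⁽ʲ⁺¹⁾`. -/
theorem P_mul_a_corollary {A : Type*} [CStarAlgebra A] [PartialOrder A] [StarOrderedRing A]
    {d : ℕ} (hd : 0 < d) {μ : ℝ} (hμ₁ : -1 < μ) (hμ₂ : μ < 1)
    (t T P : ℕ → A) (a : ℕ → ℕ → A)
    (rel1 : ∀ i j, 1 ≤ i → i ≤ d → 1 ≤ j → j ≤ d → i ≠ j → star (t i) * t j = 0)
    (rel2 : ∀ i, 1 ≤ i → i ≤ d →
      star (t i) * t i = 1 - ∑ k ∈ Finset.Ico 1 i, t k * star (t k))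
    (rel3 : ∀ i j, 1 ≤ i → i < j → j ≤ d → t j * t i = 0)
    (hP : ∀ j, P j = 1 - ∑ k ∈ Finset.Icc 1 j, t k * star (t k))
    (hTpos : ∀ i, 1 ≤ i → i ≤ d → 0 ≤ T i)
    (hTsq : ∀ i, 1 ≤ i → i ≤ d →
      HasSum (fun n : ℕ => μ ^ (2 * n) • ((t i) ^ (n + 1) * star ((t i) ^ (n + 1))))
        (T i ^ 2))
    (haii : ∀ i, 1 ≤ i → i ≤ d → a i i = T i * t i)
    (haij : ∀ i j, 1 ≤ j → j < i → i ≤ d →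
      HasSum (fun n : ℕ => μ ^ n • ((t j) ^ n * a i (j + 1) * star ((t j) ^ n)))
        (a i j)) :
    ∀ i j k, 1 ≤ k → k ≤ j → j < i → i ≤ d → P k * a i (j + 1) = a i (j + 1) :=
  P_mul_a_corollary_general t T P a rel1 hP hTpos hTsq haii haij
end

section
/- (Lemma 2) For all 1 ≤ k ≤ j < i ≤ d one has t_k^* a_i^{(j+1)} = 0, a_i^{(j+1)} t_k = 0, t_k^* (a_i^{(j+1)})^* = 0, and (a_i^{(j+1)})^* t_k = 0. -/
/-!
Both identities `tₖ* a = 0` and `a tₖ = 0` propagate down the recursion `j ↦ a_i⁽ʲ⁾`: every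
term `μⁿ tⱼⁿ a tⱼ*ⁿ` of the series is killed by `tₖ*` on the left and by `tₖ` on the right, either
through `tₖ* tⱼ = 0` (for `n ≥ 1`) or through the previous step (for `n = 0`). At the start
`a_i⁽ⁱ⁾ = Tᵢ tᵢ`, the same argument applied to the series for `Tᵢ²` gives `tₖ* Tᵢ² = 0`, hence
`tₖ* Tᵢ = 0` by the C*-identity, while `tᵢ tₖ = 0` is one of the relations. The two starred
identities are the adjoints of these.
-/

theorem HasSum.mul_left_eq_zero_s7 {ι α : Type*} [NonUnitalNonAssocSemiring α] [TopologicalSpace α]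
    [IsTopologicalSemiring α] [T2Space α] {f : ι → α} {a : α} (hf : HasSum f a) {x : α}
    (h : ∀ i, x * f i = 0) : x * a = 0 :=
  (hf.mul_left x).unique (by simpa only [h] using hasSum_zero)

theorem HasSum.mul_right_eq_zero {ι α : Type*} [NonUnitalNonAssocSemiring α] [TopologicalSpace α]
    [IsTopologicalSemiring α] [T2Space α] {f : ι → α} {a : α} (hf : HasSum f a) {x : α}
    (h : ∀ i, f i * x = 0) : a * x = 0 :=
  (hf.mul_right x).unique (by simpa only [h] using hasSum_zero)

section MonoidWithZero

variable {M : Type*} [MonoidWithZero M]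

theorem mul_pow_mul_mul_eq_zero {x u b : M} (hxu : x * u = 0) (hxb : x * b = 0) (n : ℕ)
    (c : M) : x * (u ^ n * b * c) = 0 := by
  cases n with
  | zero => rw [pow_zero, one_mul, ← mul_assoc, hxb, zero_mul]
  | succ n => rw [pow_succ', mul_assoc, mul_assoc, ← mul_assoc x, hxu, zero_mul]

theorem mul_mul_pow_mul_eq_zero {y v b : M} (hvy : v * y = 0) (hby : b * y = 0) (n : ℕ)
    (c : M) : c * b * v ^ n * y = 0 := by
  cases n with
  | zero => rw [pow_zero, mul_one, mul_assoc, hby, mul_zero]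
  | succ n => rw [pow_succ, ← mul_assoc, mul_assoc _ v, hvy, mul_zero]

end MonoidWithZero

theorem IsSelfAdjoint.mul_eq_zero_of_mul_sq_eq_zero {E : Type*} [NormedRing E]
    [StarRing E] [CStarRing E] {T x : E} (hT : IsSelfAdjoint T) (h : x * T ^ 2 = 0) :
    x * T = 0 := by
  have hTx : T * star x = 0 := by
    rw [← CStarRing.star_mul_self_eq_zero_iff, star_mul, star_star, hT.star_eq, ← mul_assoc,
      mul_assoc x, ← sq, h, zero_mul]
  simpa [hT.star_eq] using congrArg star hTx

section CStarAlgebra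

variable {A : Type*} [CStarAlgebra A] {s u b c T : A} {μ : ℝ}

theorem star_mul_eq_zero_and_mul_eq_zero_of_hasSum_conj_pow
    (hc : HasSum (fun n : ℕ => μ ^ n • (u ^ n * b * star (u ^ n))) c)
    (hsu : star s * u = 0) (hsb : star s * b = 0) (hbs : b * s = 0) :
    star s * c = 0 ∧ c * s = 0 := by
  have hus : star u * s = 0 := by simpa using congrArg star hsu
  refine ⟨hc.mul_left_eq_zero_s7 fun n => ?_, hc.mul_right_eq_zero fun n => ?_⟩
  · rw [mul_smul_comm, mul_pow_mul_mul_eq_zero hsu hsb, smul_zero]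
  · rw [smul_mul_assoc, star_pow, mul_mul_pow_mul_eq_zero hus hbs, smul_zero]

theorem star_mul_eq_zero_and_mul_eq_zero_of_hasSum_sq (hT : IsSelfAdjoint T)
    (hT2 : HasSum (fun n : ℕ => μ ^ (2 * n) • (u ^ (n + 1) * star (u ^ (n + 1)))) (T ^ 2))
    (hsu : star s * u = 0) (hus : u * s = 0) :
    star s * (T * u) = 0 ∧ T * u * s = 0 := by
  have hsT2 : star s * T ^ 2 = 0 := hT2.mul_left_eq_zero_s7 fun n => by
    rw [mul_smul_comm, pow_succ, mul_pow_mul_mul_eq_zero hsu hsu, smul_zero]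
  refine ⟨?_, by rw [mul_assoc, hus, mul_zero]⟩
  rw [← mul_assoc, hT.mul_eq_zero_of_mul_sq_eq_zero hsT2, zero_mul]

end CStarAlgebra

theorem t_star_a_lemma2_general {A : Type*} [CStarAlgebra A] [PartialOrder A] [StarOrderedRing A]
    {d : ℕ} {μ : ℝ}
    (t T : ℕ → A) (a : ℕ → ℕ → A)
    (rel1 : ∀ i j, 1 ≤ i → i ≤ d → 1 ≤ j → j ≤ d → i ≠ j → star (t i) * t j = 0)
    (rel3 : ∀ i j, 1 ≤ i → i < j → j ≤ d → t j * t i = 0)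
    (hTpos : ∀ i, 1 ≤ i → i ≤ d → 0 ≤ T i)
    (hTsq : ∀ i, 1 ≤ i → i ≤ d →
      HasSum (fun n : ℕ => μ ^ (2 * n) • ((t i) ^ (n + 1) * star ((t i) ^ (n + 1))))
        (T i ^ 2))
    (haii : ∀ i, 1 ≤ i → i ≤ d → a i i = T i * t i)
    (haij : ∀ i j, 1 ≤ j → j < i → i ≤ d →
      HasSum (fun n : ℕ => μ ^ n • ((t j) ^ n * a i (j + 1) * star ((t j) ^ n)))
        (a i j)) :
    ∀ i j k, 1 ≤ k → k ≤ j → j < i → i ≤ d →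
      star (t k) * a i (j + 1) = 0 ∧ a i (j + 1) * t k = 0 ∧
      star (t k) * star (a i (j + 1)) = 0 ∧ star (a i (j + 1)) * t k = 0 := by
  intro i j k hk hkj hji hid
  have base : star (t k) * a i i = 0 ∧ a i i * t k = 0 := by
    rw [haii i (by omega) hid]
    exact star_mul_eq_zero_and_mul_eq_zero_of_hasSum_sq (hTpos i (by omega) hid).isSelfAdjoint
      (hTsq i (by omega) hid) (rel1 k i hk (by omega) (by omega) hid (by omega))
      (rel3 k i hk (by omega) hid)
  obtain ⟨hleft, hright⟩ : star (t k) * a i (j + 1) = 0 ∧ a i (j + 1) * t k = 0 := by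
    refine Nat.decreasingInduction'
      (P := fun m => star (t k) * a i m = 0 ∧ a i m * t k = 0) (fun m hmi hjm ih => ?_) hji base
    exact star_mul_eq_zero_and_mul_eq_zero_of_hasSum_conj_pow (haij i m (by omega) hmi hid)
      (rel1 k m hk (by omega) (by omega) (by omega) (by omega)) ih.1 ih.2
  refine ⟨hleft, hright, ?_, ?_⟩
  · rw [← star_mul, hright, star_zero]
  · simpa using congrArg star hleft

/-- **Lemma 2.** For `1 ≤ k ≤ j < i ≤ d`: `tₖ* aᵢ⁽ʲ⁺¹⁾ = 0`,
`aᵢ⁽ʲ⁺¹⁾ tₖ = 0`, `tₖ* (aᵢ⁽ʲ⁺¹⁾)* = 0`, and `(aᵢ⁽ʲ⁺¹⁾)* tₖ = 0`. -/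
theorem t_star_a_lemma2 {A : Type*} [CStarAlgebra A] [PartialOrder A] [StarOrderedRing A]
    {d : ℕ} (hd : 0 < d) {μ : ℝ} (hμ₁ : -1 < μ) (hμ₂ : μ < 1)
    (t T P : ℕ → A) (a : ℕ → ℕ → A)
    (rel1 : ∀ i j, 1 ≤ i → i ≤ d → 1 ≤ j → j ≤ d → i ≠ j → star (t i) * t j = 0)
    (rel2 : ∀ i, 1 ≤ i → i ≤ d →
      star (t i) * t i = 1 - ∑ k ∈ Finset.Ico 1 i, t k * star (t k))
    (rel3 : ∀ i j, 1 ≤ i → i < j → j ≤ d → t j * t i = 0)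
    (hP : ∀ j, P j = 1 - ∑ k ∈ Finset.Icc 1 j, t k * star (t k))
    (hTpos : ∀ i, 1 ≤ i → i ≤ d → 0 ≤ T i)
    (hTsq : ∀ i, 1 ≤ i → i ≤ d →
      HasSum (fun n : ℕ => μ ^ (2 * n) • ((t i) ^ (n + 1) * star ((t i) ^ (n + 1))))
        (T i ^ 2))
    (haii : ∀ i, 1 ≤ i → i ≤ d → a i i = T i * t i)
    (haij : ∀ i j, 1 ≤ j → j < i → i ≤ d →
      HasSum (fun n : ℕ => μ ^ n • ((t j) ^ n * a i (j + 1) * star ((t j) ^ n)))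
        (a i j)) :
    ∀ i j k, 1 ≤ k → k ≤ j → j < i → i ≤ d →
      star (t k) * a i (j + 1) = 0 ∧ a i (j + 1) * t k = 0 ∧
      star (t k) * star (a i (j + 1)) = 0 ∧ star (a i (j + 1)) * t k = 0 :=
  t_star_a_lemma2_general t T a rel1 rel3 hTpos hTsq haii haij
end
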